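/- arXiv:2511.14898 — 2 statements merged into one kernel-verified Lean document; each statement's English description precedes it below -/
import Mathlib

section
/- The set 𝔸(ℂ) of Appell operators (Sheffer operators with B(ξ) = ξ) is an abelian normal subgroup of the Sheffer group 𝕊(ℂ), the set 𝔹(ℂ) of umbral operators (Sheffer operators with A(ξ) = 1) is a subgroup, and 𝕊(ℂ) = 𝔸(ℂ) ⋊ 𝔹(ℂ): every Sheffer operator factors uniquely as an Appell operator times an umbral operator. -/
/-- Composition of formal power series with polynomial coefficients. -/
noncomputable def compP (f g : PowerSeries (Polynomial ℂ)) : PowerSeries (Polynomial ℂ) :=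
  PowerSeries.mk fun n =>
    PowerSeries.coeff (R := Polynomial ℂ) n
      (∑ k ∈ Finset.range (n + 1),
        PowerSeries.C (R := Polynomial ℂ) (PowerSeries.coeff (R := Polynomial ℂ) k f) * g ^ k)

/-- The series `z·B(ξ)`. -/
noncomputable def zS (B : PowerSeries ℂ) : PowerSeries (Polynomial ℂ) :=
  PowerSeries.mk fun k => Polynomial.X * Polynomial.C (PowerSeries.coeff (R := ℂ) k B)

/-- The exponential generating function `exp(zB(ξ))·A(ξ)`. -/
noncomputable def genFun (A B : PowerSeries ℂ) : PowerSeries (Polynomial ℂ) :=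
  compP (PowerSeries.exp (Polynomial ℂ)) (zS B) * PowerSeries.map Polynomial.C A

/-- `𝓕₀(ℂ)`. -/
def F0 (A : PowerSeries ℂ) : Prop := PowerSeries.constantCoeff (R := ℂ) A = 1

/-- `𝓕₁(ℂ)`. -/
def F1 (B : PowerSeries ℂ) : Prop :=
  PowerSeries.constantCoeff (R := ℂ) B = 0 ∧ PowerSeries.coeff (R := ℂ) 1 B = 1

/-- Infinite upper unitriangular complex matrices. -/
def UnitriM (P : ℕ → ℕ → ℂ) : Prop := (∀ k, P k k = 1) ∧ ∀ i k, k < i → P i k = 0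

/-- Matrix product. -/
noncomputable def mulU (P Q : ℕ → ℕ → ℂ) : ℕ → ℕ → ℂ :=
  fun i k => ∑ j ∈ Finset.Icc i k, P i j * Q j k

/-- The identity matrix. -/
def idU : ℕ → ℕ → ℂ := fun i k => if i = k then 1 else 0

/-- The generating function of a unitriangular operator. -/
noncomputable def GFm (P : ℕ → ℕ → ℂ) : PowerSeries (Polynomial ℂ) :=
  PowerSeries.mk fun k =>
    Polynomial.C ((Nat.factorial k : ℂ))⁻¹ *
      ∑ i ∈ Finset.range (k + 1), Polynomial.C (P i k) * Polynomial.X ^ i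

/-- Sheffer operators: generating function `exp(zB(ξ))A(ξ)`. -/
def IsSheffer (P : ℕ → ℕ → ℂ) : Prop :=
  UnitriM P ∧ ∃ A B, F0 A ∧ F1 B ∧ GFm P = genFun A B

/-- Appell operators: Sheffer with `B(ξ) = ξ`. -/
def IsAppell (P : ℕ → ℕ → ℂ) : Prop :=
  UnitriM P ∧ ∃ A, F0 A ∧ GFm P = genFun A PowerSeries.X

/-- Umbral operators: Sheffer with `A(ξ) = 1`. -/
def IsUmbral (P : ℕ → ℕ → ℂ) : Prop :=
  UnitriM P ∧ ∃ B, F1 B ∧ GFm P = genFun 1 B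

section Aux
open PowerSeries Finset

noncomputable def pcomp (f g : PowerSeries ℂ) : PowerSeries ℂ :=
  PowerSeries.mk fun n => ∑ j ∈ Finset.range (n+1), coeff (R := ℂ) j f * coeff (R := ℂ) n (g^j)

lemma coeff_pow_eq_zero {g : PowerSeries ℂ} (hg : constantCoeff (R := ℂ) g = 0) {n j : ℕ}
    (h : n < j) : coeff (R := ℂ) n (g ^ j) = 0 := by
  have : (X : PowerSeries ℂ)^j ∣ g^j := pow_dvd_pow_of_dvd (X_dvd_iff.2 hg) j
  exact X_pow_dvd_iff.1 this n h

lemma coeff_mul_pow_eq_zero {g : PowerSeries ℂ} (a : PowerSeries ℂ)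
    (hg : constantCoeff (R := ℂ) g = 0) {n j : ℕ} (h : n < j) : coeff (R := ℂ) n (a * g ^ j) = 0 := by
  have : (X : PowerSeries ℂ)^j ∣ a * g^j := Dvd.dvd.mul_left (pow_dvd_pow_of_dvd (X_dvd_iff.2 hg) j) a
  exact X_pow_dvd_iff.1 this n h

lemma coeff_pcomp {f g : PowerSeries ℂ} (hg : constantCoeff (R := ℂ) g = 0) {n N : ℕ} (h : n ≤ N) :
    coeff (R := ℂ) n (pcomp f g) = ∑ j ∈ Finset.range (N+1), coeff (R := ℂ) j f * coeff (R := ℂ) n (g^j) := by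
  rw [pcomp, coeff_mk]
  refine Finset.sum_subset (by intro x hx; simp_all; omega) ?_
  intro j hj hj2
  simp only [Finset.mem_range, not_lt] at hj2
  rw [coeff_pow_eq_zero hg (by omega), mul_zero]

lemma coeff_mul_pcomp {g : PowerSeries ℂ} (a f : PowerSeries ℂ)
    (hg : constantCoeff (R := ℂ) g = 0) (k : ℕ) :
    coeff (R := ℂ) k (a * pcomp f g) = ∑ j ∈ Finset.range (k+1), coeff (R := ℂ) j f * coeff (R := ℂ) k (a * g^j) := by
  rw [coeff_mul]
  have : ∀ p ∈ antidiagonal k, (coeff (R := ℂ) p.1 a) * coeff (R := ℂ) p.2 (pcomp f g)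
      = ∑ j ∈ Finset.range (k+1), coeff (R := ℂ) j f * (coeff (R := ℂ) p.1 a * coeff (R := ℂ) p.2 (g^j)) := by
    intro p hp
    rw [Finset.HasAntidiagonal.mem_antidiagonal] at hp
    rw [coeff_pcomp hg (by omega : p.2 ≤ k), Finset.mul_sum]
    exact Finset.sum_congr rfl (by intros; ring)
  rw [Finset.sum_congr rfl this, Finset.sum_comm]
  refine Finset.sum_congr rfl fun j _ => ?_
  rw [← Finset.mul_sum, coeff_mul]

lemma pcomp_mul {g : PowerSeries ℂ} (f₁ f₂ : PowerSeries ℂ) (hg : constantCoeff (R := ℂ) g = 0) :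
    pcomp (f₁ * f₂) g = pcomp f₁ g * pcomp f₂ g := by
  ext n
  rw [mul_comm (pcomp f₁ g), coeff_mul_pcomp _ _ hg]
  have step : ∀ j, coeff (R := ℂ) n (pcomp f₂ g * g ^ j)
      = ∑ b ∈ Finset.range (n+1), coeff (R := ℂ) b f₂ * coeff (R := ℂ) n (g^(j+b)) := by
    intro j
    rw [mul_comm, coeff_mul_pcomp _ _ hg]
    refine Finset.sum_congr rfl fun b _ => ?_
    rw [pow_add]
  simp_rw [step, Finset.mul_sum]
  -- now RHS = ∑_{a≤n} ∑_{b≤n} f₁_a f₂_b coeff n g^(a+b)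
  rw [pcomp, coeff_mk]
  have L : ∑ j ∈ Finset.range (n+1), coeff (R := ℂ) j (f₁*f₂) * coeff (R := ℂ) n (g^j)
      = ∑ p ∈ (Finset.range (n+1)).biUnion antidiagonal,
          coeff (R := ℂ) p.1 f₁ * coeff (R := ℂ) p.2 f₂ * coeff (R := ℂ) n (g^(p.1+p.2)) := by
    rw [Finset.sum_biUnion]
    · refine Finset.sum_congr rfl fun j _ => ?_
      rw [coeff_mul, Finset.sum_mul]
      refine Finset.sum_congr rfl fun p hp => ?_
      rw [Finset.HasAntidiagonal.mem_antidiagonal] at hp; rw [hp]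
    · intro x _ y _ hxy
      simp only [Finset.disjoint_left]
      intro p hp hp2
      rw [Finset.HasAntidiagonal.mem_antidiagonal] at hp hp2; omega
  rw [L]
  rw [show ((Finset.range (n+1)).biUnion antidiagonal : Finset (ℕ×ℕ))
      = (Finset.range (n+1) ×ˢ Finset.range (n+1)).filter (fun p => p.1 + p.2 ≤ n) from ?_]
  · rw [Finset.sum_filter]
    rw [Finset.sum_product]
    refine Finset.sum_congr rfl fun a _ => Finset.sum_congr rfl fun b _ => ?_
    by_cases h : a + b ≤ n
    · simp [h]; ring
    · simp [h, coeff_pow_eq_zero hg (by omega : n < a + b)]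
  · ext p
    simp only [Finset.mem_biUnion, Finset.mem_range, Finset.HasAntidiagonal.mem_antidiagonal, Finset.mem_filter,
      Finset.mem_product]
    constructor
    · rintro ⟨j, hj, rfl⟩; omega
    · rintro ⟨⟨h1, h2⟩, h3⟩; exact ⟨p.1 + p.2, by omega, rfl⟩

lemma pcomp_one (g : PowerSeries ℂ) : pcomp 1 g = 1 := by
  ext n
  rw [pcomp, coeff_mk]
  have : ∀ j ∈ Finset.range (n+1), coeff (R := ℂ) j (1 : PowerSeries ℂ) * coeff (R := ℂ) n (g^j)
      = if j = 0 then coeff (R := ℂ) n ((1:PowerSeries ℂ)) else 0 := by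
    intro j _
    rcases j with - | j
    · simp
    · simp [coeff_one]
  rw [Finset.sum_congr rfl this, Finset.sum_ite_eq' (Finset.range (n+1)) 0]
  simp

lemma pcomp_pow {g : PowerSeries ℂ} (f : PowerSeries ℂ) (hg : constantCoeff (R := ℂ) g = 0) (k : ℕ) :
    pcomp (f^k) g = (pcomp f g)^k := by
  induction k with
  | zero => simpa using pcomp_one g
  | succ k ih => rw [pow_succ, pow_succ, pcomp_mul _ _ hg, ih]

lemma pcomp_X_left {g : PowerSeries ℂ} (hg : constantCoeff (R := ℂ) g = 0) : pcomp X g = g := by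
  ext n
  rw [pcomp, coeff_mk]
  have : ∀ j ∈ Finset.range (n+1), coeff (R := ℂ) j (X : PowerSeries ℂ) * coeff (R := ℂ) n (g^j)
      = if j = 1 then coeff (R := ℂ) n (g^1) else 0 := by
    intro j _
    rw [coeff_X]
    split <;> simp_all
  rw [Finset.sum_congr rfl this, Finset.sum_ite_eq' (Finset.range (n+1)) 1]
  split
  · simp
  · simp_all only [Finset.mem_range, not_lt, pow_one]
    have : n = 0 := by omega
    subst this
    simp [coeff_zero_eq_constantCoeff, hg]

lemma pcomp_X_right (f : PowerSeries ℂ) : pcomp f X = f := by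
  ext n
  rw [pcomp, coeff_mk]
  have : ∀ j ∈ Finset.range (n+1), coeff (R := ℂ) j f * coeff (R := ℂ) n ((X:PowerSeries ℂ)^j)
      = if j = n then coeff (R := ℂ) n f * 1 else 0 := by
    intro j _
    rw [coeff_X_pow]
    split
    · simp_all
    · simp_all [eq_comm]
  rw [Finset.sum_congr rfl this, Finset.sum_ite_eq' (Finset.range (n+1)) n]
  simp

lemma constantCoeff_pcomp {g : PowerSeries ℂ} (f : PowerSeries ℂ) (hg : constantCoeff (R := ℂ) g = 0) :
    constantCoeff (R := ℂ) (pcomp f g) = constantCoeff (R := ℂ) f := by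
  rw [← coeff_zero_eq_constantCoeff_apply, ← coeff_zero_eq_constantCoeff_apply, pcomp, coeff_mk]
  simp

lemma coeff_one_pcomp {f g : PowerSeries ℂ} (hg : constantCoeff (R := ℂ) g = 0) :
    coeff (R := ℂ) 1 (pcomp f g) = coeff (R := ℂ) 1 f * coeff (R := ℂ) 1 g := by
  rw [pcomp, coeff_mk]
  rw [show Finset.range 2 = {0, 1} from rfl]
  rw [Finset.sum_insert (by simp), Finset.sum_singleton]
  simp [coeff_one]

lemma pcomp_assoc {f g h : PowerSeries ℂ} (hg : constantCoeff (R := ℂ) g = 0)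
    (hh : constantCoeff (R := ℂ) h = 0) : pcomp (pcomp f g) h = pcomp f (pcomp g h) := by
  have hgh : constantCoeff (R := ℂ) (pcomp g h) = 0 := by rw [constantCoeff_pcomp _ hh, hg]
  ext n
  have step : ∀ j, coeff (R := ℂ) n ((pcomp g h)^j) = ∑ k ∈ Finset.range (n+1),
      coeff (R := ℂ) k (g^j) * coeff (R := ℂ) n (h^k) := by
    intro j
    rw [← pcomp_pow _ hh, coeff_pcomp hh le_rfl]
  rw [coeff_pcomp hh le_rfl, coeff_pcomp hgh le_rfl]
  simp_rw [step, Finset.mul_sum]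
  rw [Finset.sum_comm]
  refine Finset.sum_congr rfl fun k hk => ?_
  rw [coeff_pcomp hg (by simp at hk; omega : k ≤ n), Finset.sum_mul]
  exact Finset.sum_congr rfl fun j _ => by ring

noncomputable def MM (A B : PowerSeries ℂ) : ℕ → ℕ → ℂ :=
  fun i k => (Nat.factorial k : ℂ) * ((Nat.factorial i : ℂ))⁻¹ * PowerSeries.coeff (R := ℂ) k (A * B ^ i)

/-- shift: if constantCoeff B = 0 then B = X * D with D₀ = B₁ -/
lemma exists_shift {B : PowerSeries ℂ} (hB : constantCoeff (R := ℂ) B = 0) :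
    ∃ D, B = X * D ∧ constantCoeff (R := ℂ) D = coeff (R := ℂ) 1 B := by
  refine ⟨PowerSeries.mk fun n => coeff (R := ℂ) (n+1) B, ?_, by simp⟩
  ext n
  rcases n with - | n
  · simp [hB]
  · simp [coeff_succ_X_mul]

lemma coeff_diag {A B : PowerSeries ℂ} (hB : constantCoeff (R := ℂ) B = 0) (k : ℕ) :
    coeff (R := ℂ) k (A * B ^ k) = constantCoeff (R := ℂ) A * (coeff (R := ℂ) 1 B)^k := by
  obtain ⟨D, rfl, hD⟩ := exists_shift hB
  rw [mul_pow, show A * ((X:PowerSeries ℂ)^k * D^k) = (X:PowerSeries ℂ)^k * (A * D^k) by ring]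
  have h0 := coeff_X_pow_mul (A * D^k) k 0
  rw [zero_add] at h0
  rw [h0, ← hD]
  simp [coeff_zero_eq_constantCoeff_apply, map_mul, map_pow]

lemma MM_unitri {A B : PowerSeries ℂ} (hA : constantCoeff (R := ℂ) A = 1)
    (hB : constantCoeff (R := ℂ) B = 0) (hB1 : coeff (R := ℂ) 1 B = 1) : UnitriM (MM A B) := by
  constructor
  · intro k
    rw [MM, coeff_diag hB, hA, hB1]
    simp [mul_inv_cancel₀ (by exact_mod_cast Nat.factorial_ne_zero k : (Nat.factorial k : ℂ) ≠ 0)]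
  · intro i k hki
    rw [MM, coeff_mul_pow_eq_zero A hB hki, mul_zero]

lemma mulU_MM {A B A' B' : PowerSeries ℂ} (hB : constantCoeff (R := ℂ) B = 0)
    (hB' : constantCoeff (R := ℂ) B' = 0) :
    mulU (MM A B) (MM A' B') = MM (A' * pcomp A B') (pcomp B B') := by
  funext i k
  rw [mulU]
  have key : ∀ j ∈ Finset.Icc i k, MM A B i j * MM A' B' j k
      = (Nat.factorial k : ℂ) * ((Nat.factorial i : ℂ))⁻¹ *
        (coeff (R := ℂ) j (A * B^i) * coeff (R := ℂ) k (A' * B'^j)) := by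
    intro j hj
    rw [MM, MM]
    have hj' : (Nat.factorial j : ℂ) ≠ 0 := by exact_mod_cast Nat.factorial_ne_zero j
    have hi' : (Nat.factorial i : ℂ) ≠ 0 := by exact_mod_cast Nat.factorial_ne_zero i
    field_simp
  rw [Finset.sum_congr rfl key, ← Finset.mul_sum, MM]
  congr 1
  have ext1 : ∑ j ∈ Finset.Icc i k, coeff (R := ℂ) j (A * B^i) * coeff (R := ℂ) k (A' * B'^j)
      = ∑ j ∈ Finset.range (k+1), coeff (R := ℂ) j (A * B^i) * coeff (R := ℂ) k (A' * B'^j) := by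
    rcases le_or_gt i k with h | h
    · refine Finset.sum_subset (fun x hx => by simp_all) ?_
      intro j hj hj2
      simp only [Finset.mem_range, Finset.mem_Icc, not_and, not_le] at hj hj2
      rw [coeff_mul_pow_eq_zero A hB (by omega), zero_mul]
    · rw [Finset.Icc_eq_empty (by omega), Finset.sum_empty]
      symm
      refine Finset.sum_eq_zero fun j hj => ?_
      simp only [Finset.mem_range] at hj
      rcases le_or_gt j k with h2 | h2
      · rw [coeff_mul_pow_eq_zero A hB (by omega), zero_mul]
      · omega
  rw [ext1, ← pcomp_pow _ hB', mul_assoc, ← pcomp_mul _ _ hB',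
    coeff_mul_pcomp A' (A * B^i) hB' k]

lemma fact_ne (k : ℕ) : (Nat.factorial k : ℂ) ≠ 0 := by
  exact_mod_cast Nat.factorial_ne_zero k

/-- coefficient extraction for GFm -/
lemma GFm_coeff_coeff (P : ℕ → ℕ → ℂ) (k i : ℕ) :
    (PowerSeries.coeff (R := Polynomial ℂ) k (GFm P)).coeff i
      = if i ≤ k then ((Nat.factorial k : ℂ))⁻¹ * P i k else 0 := by
  rw [GFm, coeff_mk, Polynomial.coeff_C_mul, Polynomial.finset_sum_coeff]
  have : ∀ j ∈ Finset.range (k+1), (Polynomial.C (P j k) * Polynomial.X ^ j).coeff i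
      = if j = i then P j k else 0 := by
    intro j _
    rw [Polynomial.coeff_C_mul, Polynomial.coeff_X_pow]
    split
    · simp_all
    · simp_all [eq_comm]
  rw [Finset.sum_congr rfl this, Finset.sum_ite_eq' (Finset.range (k+1)) i]
  simp only [Finset.mem_range]
  split
  · rw [if_pos (by omega)]
  · rw [if_neg (by omega), mul_zero]

lemma coeff_zS (B : PowerSeries ℂ) :
    zS B = PowerSeries.C (R := Polynomial ℂ) Polynomial.X * PowerSeries.map Polynomial.C B := by
  ext n
  rw [zS, coeff_mk, PowerSeries.coeff_C_mul, PowerSeries.coeff_map]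

lemma zS_pow (B : PowerSeries ℂ) (k : ℕ) :
    (zS B)^k = PowerSeries.C (R := Polynomial ℂ) (Polynomial.X^k)
      * PowerSeries.map Polynomial.C (B^k) := by
  rw [coeff_zS, mul_pow, ← map_pow, ← map_pow]

lemma coeff_zS_pow (B : PowerSeries ℂ) (k n : ℕ) :
    PowerSeries.coeff (R := Polynomial ℂ) n ((zS B)^k)
      = Polynomial.X ^ k * Polynomial.C (coeff (R := ℂ) n (B^k)) := by
  rw [zS_pow, PowerSeries.coeff_C_mul, PowerSeries.coeff_map]

lemma coeff_exp' (k : ℕ) : PowerSeries.coeff (R := Polynomial ℂ) k (PowerSeries.exp (Polynomial ℂ))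
    = Polynomial.C ((Nat.factorial k : ℂ))⁻¹ := by
  rw [PowerSeries.coeff_exp]
  rw [Polynomial.algebraMap_apply]
  congr 1
  rw [eq_ratCast (algebraMap ℚ ℂ) (1 / (Nat.factorial k : ℚ))]
  push_cast
  rw [one_div]

lemma coeff_E {B : PowerSeries ℂ} (hB : constantCoeff (R := ℂ) B = 0) (l m : ℕ) :
    (PowerSeries.coeff (R := Polynomial ℂ) l (compP (PowerSeries.exp (Polynomial ℂ)) (zS B))).coeff m
      = ((Nat.factorial m : ℂ))⁻¹ * coeff (R := ℂ) l (B^m) := by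
  rw [compP, coeff_mk, map_sum]
  have : ∀ k ∈ Finset.range (l+1),
      (PowerSeries.coeff (R := Polynomial ℂ) l (PowerSeries.C (R := Polynomial ℂ)
        (PowerSeries.coeff (R := Polynomial ℂ) k (PowerSeries.exp (Polynomial ℂ))) * (zS B)^k)).coeff m
      = if k = m then ((Nat.factorial m:ℂ))⁻¹ * coeff (R := ℂ) l (B^m) else 0 := by
    intro k _
    rw [PowerSeries.coeff_C_mul, coeff_exp', coeff_zS_pow]
    rw [show Polynomial.C ((Nat.factorial k:ℂ))⁻¹ * (Polynomial.X ^ k * Polynomial.C (coeff (R := ℂ) l (B^k)))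
      = Polynomial.C ((Nat.factorial k:ℂ))⁻¹ * Polynomial.C (coeff (R := ℂ) l (B^k)) * Polynomial.X ^ k by ring]
    rw [Polynomial.coeff_mul_X_pow', ← Polynomial.C_mul, Polynomial.coeff_C]
    rcases eq_or_ne k m with rfl | hne
    · simp
    · rw [if_neg hne]
      split
      · rw [if_neg (by omega)]
      · rfl
  rw [Polynomial.finset_sum_coeff, Finset.sum_congr rfl this,
    Finset.sum_ite_eq' (Finset.range (l+1)) m]
  split
  · rfl
  · simp only [Finset.mem_range, not_lt] at *
    rw [coeff_pow_eq_zero hB (by omega), mul_zero]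

lemma GFm_MM {A B : PowerSeries ℂ} (hB : constantCoeff (R := ℂ) B = 0) :
    GFm (MM A B) = genFun A B := by
  ext n m
  rw [GFm_coeff_coeff]
  rw [genFun, PowerSeries.coeff_mul, Polynomial.finset_sum_coeff]
  have : ∀ p ∈ antidiagonal n,
      (PowerSeries.coeff (R := Polynomial ℂ) p.1 (compP (PowerSeries.exp (Polynomial ℂ)) (zS B)) *
        PowerSeries.coeff (R := Polynomial ℂ) p.2 (PowerSeries.map Polynomial.C A)).coeff m
      = ((Nat.factorial m:ℂ))⁻¹ * (coeff (R := ℂ) p.1 (B^m) * coeff (R := ℂ) p.2 A) := by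
    intro p _
    rw [PowerSeries.coeff_map, Polynomial.coeff_mul_C, coeff_E hB]
    ring
  rw [Finset.sum_congr rfl this, ← Finset.mul_sum, ← PowerSeries.coeff_mul]
  split
  · rw [MM, show ((Nat.factorial n:ℂ))⁻¹ * ((Nat.factorial n:ℂ) * ((Nat.factorial m:ℂ))⁻¹ * coeff (R := ℂ) n (A * B^m))
      = ((Nat.factorial n:ℂ))⁻¹ * (Nat.factorial n:ℂ) * (((Nat.factorial m:ℂ))⁻¹ * coeff (R := ℂ) n (A * B^m)) by ring,
      inv_mul_cancel₀ (fact_ne n), one_mul, mul_comm A (B^m)]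
  · rw [show (B^m * A) = A * B^m by ring, coeff_mul_pow_eq_zero A hB (by omega), mul_zero]

/-- powers only depend on lower coefficients -/
lemma coeff_pow_congr {f g : PowerSeries ℂ} (hf : constantCoeff (R := ℂ) f = 0)
    (hg : constantCoeff (R := ℂ) g = 0) {n j : ℕ} (hj : 2 ≤ j)
    (h : ∀ m < n, coeff (R := ℂ) m f = coeff (R := ℂ) m g) : coeff (R := ℂ) n (f^j) = coeff (R := ℂ) n (g^j) := by
  have hd : (X : PowerSeries ℂ)^n ∣ (f - g) := by
    rw [X_pow_dvd_iff]
    intro m hm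
    rw [map_sub, h m hm, sub_self]
  have hX : (X : PowerSeries ℂ) ∣ g := X_dvd_iff.2 hg
  have hXd : (X : PowerSeries ℂ) ∣ (f - g) := by
    rw [X_dvd_iff, map_sub, hf, hg, sub_self]
  have hfj : f ^ j = ∑ i ∈ Finset.range (j+1), g ^ i * (f - g) ^ (j - i) * (Nat.choose j i) := by
    conv_lhs => rw [show f = g + (f - g) by ring, add_pow]
  rw [hfj, map_sum, Finset.sum_eq_single j]
  · simp
  · intro i hi hij
    simp only [Finset.mem_range] at hi
    have key : (X : PowerSeries ℂ)^(n+1) ∣ g ^ i * (f - g) ^ (j - i) := by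
      rw [show (X : PowerSeries ℂ)^(n+1) = X * X^n by ring]
      rcases Nat.eq_zero_or_pos i with rfl | hi0
      · obtain ⟨r, hr⟩ : ∃ r, j - 0 = r + 1 + 1 := ⟨j - 2, by omega⟩
        rw [pow_zero, one_mul, hr, pow_succ]
        exact mul_dvd_mul (dvd_pow hXd (by omega)) hd
      · obtain ⟨r, hr⟩ : ∃ r, j - i = r + 1 := ⟨j - i - 1, by omega⟩
        rw [hr, pow_succ]
        exact mul_dvd_mul (dvd_pow hX (by omega)) (Dvd.dvd.mul_left hd _)
    exact X_pow_dvd_iff.1 (key.mul_right _) n (by omega)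
  · intro h'; simp at h'

noncomputable def invAux (b : ℕ → ℂ) : ℕ → ℂ
  | 0 => 0
  | 1 => 1
  | (n+2) => -∑ j ∈ Finset.Icc 2 (n+2), b j * PowerSeries.coeff (R := ℂ) (n+2)
      ((PowerSeries.mk (fun m => if h : m < n+2 then invAux b m else 0))^j)
  termination_by n => n
  decreasing_by simp; omega

lemma exists_pcomp_right_inv {B : PowerSeries ℂ} (hB : F1 B) :
    ∃ C, F1 C ∧ pcomp B C = X := by
  set c := invAux (fun k => coeff (R := ℂ) k B) with hc
  have hc0 : c 0 = 0 := by rw [hc, invAux]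
  have hc1 : c 1 = 1 := by rw [hc, invAux]
  have hC0 : constantCoeff (R := ℂ) (PowerSeries.mk c) = 0 := by
    rw [← coeff_zero_eq_constantCoeff_apply, coeff_mk, hc0]
  refine ⟨PowerSeries.mk c, ⟨hC0, by rw [coeff_mk, hc1]⟩, ?_⟩
  ext n
  by_cases h0 : n = 0
  · subst h0
    rw [coeff_pcomp hC0 le_rfl]
    simp [hB.1, coeff_zero_eq_constantCoeff_apply]
  by_cases h1 : n = 1
  · subst h1
    rw [coeff_pcomp hC0 le_rfl]
    rw [show Finset.range 2 = {0,1} from rfl, Finset.sum_insert (by simp), Finset.sum_singleton]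
    rw [coeff_zero_eq_constantCoeff_apply, hB.1, zero_mul, zero_add, hB.2, one_mul, pow_one,
      coeff_mk, hc1, coeff_X, if_pos rfl]
  obtain ⟨m, rfl⟩ : ∃ m, n = m + 2 := ⟨n - 2, by omega⟩
  rw [coeff_pcomp hC0 le_rfl]
  have hsplit : Finset.range (m+2+1) = insert 0 (insert 1 (Finset.Icc 2 (m+2))) := by
    ext x
    simp only [Finset.mem_range, Finset.mem_insert, Finset.mem_Icc]
    omega
  rw [hsplit, Finset.sum_insert (by simp), Finset.sum_insert (by simp [Finset.mem_Icc])]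
  rw [coeff_zero_eq_constantCoeff_apply, hB.1, zero_mul, zero_add]
  rw [hB.2, one_mul, pow_one, coeff_mk]
  have hpow : ∀ j ∈ Finset.Icc 2 (m+2), coeff (R := ℂ) (m+2) ((PowerSeries.mk c)^j)
      = coeff (R := ℂ) (m+2) ((PowerSeries.mk (fun l => if h : l < m+2 then c l else 0))^j) := by
    intro j hj
    simp only [Finset.mem_Icc] at hj
    refine coeff_pow_congr hC0 ?_ hj.1 ?_
    · rw [← coeff_zero_eq_constantCoeff_apply, coeff_mk, dif_pos (by omega), hc0]
    · intro l hl
      rw [coeff_mk, coeff_mk, dif_pos hl]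
  have hcn : c (m+2) = -∑ j ∈ Finset.Icc 2 (m+2), coeff (R := ℂ) j B * PowerSeries.coeff (R := ℂ) (m+2)
      ((PowerSeries.mk (fun l => if h : l < m+2 then c l else 0))^j) := by
    rw [hc, invAux]
  rw [hcn, Finset.sum_congr rfl (fun j hj => by rw [hpow j hj] :
      ∀ j ∈ Finset.Icc 2 (m+2), coeff (R := ℂ) j B * coeff (R := ℂ) (m+2) ((PowerSeries.mk c)^j)
        = coeff (R := ℂ) j B * coeff (R := ℂ) (m+2) ((PowerSeries.mk (fun l => if h : l < m+2 then c l else 0))^j)),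
    coeff_X, if_neg (by omega)]
  ring

lemma mulU_assoc {Q : ℕ → ℕ → ℂ} (hQ : ∀ i k, k < i → Q i k = 0) (P R : ℕ → ℕ → ℂ) :
    mulU (mulU P Q) R = mulU P (mulU Q R) := by
  funext i k
  rw [mulU, mulU]
  simp only [mulU]
  have L : ∀ j ∈ Finset.Icc i k, (∑ l ∈ Finset.Icc i j, P i l * Q l j) * R j k
      = ∑ l ∈ Finset.Icc i k, P i l * Q l j * R j k := by
    intro j hj
    simp only [Finset.mem_Icc] at hj
    rw [Finset.sum_mul]
    refine Finset.sum_subset (Finset.Icc_subset_Icc le_rfl hj.2) ?_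
    intro l hl hl2
    simp only [Finset.mem_Icc] at hl hl2
    rw [hQ l j (by omega), mul_zero, zero_mul]
  have Rr : ∀ l ∈ Finset.Icc i k, P i l * (∑ j ∈ Finset.Icc l k, Q l j * R j k)
      = ∑ j ∈ Finset.Icc i k, P i l * (Q l j * R j k) := by
    intro l hl
    simp only [Finset.mem_Icc] at hl
    rw [Finset.mul_sum]
    refine Finset.sum_subset (Finset.Icc_subset_Icc hl.1 le_rfl) ?_
    intro j hj hj2
    simp only [Finset.mem_Icc] at hj hj2
    rw [hQ l j (by omega), zero_mul, mul_zero]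
  rw [Finset.sum_congr rfl L, Finset.sum_congr rfl Rr, Finset.sum_comm]
  exact Finset.sum_congr rfl fun l _ => Finset.sum_congr rfl fun j _ => by ring

lemma mulU_idU {P : ℕ → ℕ → ℂ} (hP : ∀ i k, k < i → P i k = 0) : mulU P idU = P := by
  funext i k
  rw [mulU]
  have : ∀ j ∈ Finset.Icc i k, P i j * idU j k = if j = k then P i j else 0 := by
    intro j _
    rw [idU]
    split <;> simp_all
  rw [Finset.sum_congr rfl this, Finset.sum_ite_eq' (Finset.Icc i k) k]
  simp only [Finset.mem_Icc]
  split
  · rfl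
  · rw [hP i k (by omega)]

lemma idU_mulU {P : ℕ → ℕ → ℂ} (hP : ∀ i k, k < i → P i k = 0) : mulU idU P = P := by
  funext i k
  rw [mulU]
  have : ∀ j ∈ Finset.Icc i k, idU i j * P j k = if j = i then P j k else 0 := by
    intro j _
    rw [idU]
    split
    · simp_all
    · simp_all [eq_comm]
  rw [Finset.sum_congr rfl this, Finset.sum_ite_eq' (Finset.Icc i k) i]
  simp only [Finset.mem_Icc]
  split
  · rfl
  · rw [hP i k (by omega)]

lemma mulU_inv_unique {P Q Q' : ℕ → ℕ → ℂ} (hP : ∀ i k, k < i → P i k = 0)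
    (hQ : ∀ i k, k < i → Q i k = 0) (hQ' : ∀ i k, k < i → Q' i k = 0)
    (h1 : mulU Q P = idU) (h2 : mulU P Q' = idU) : Q = Q' := by
  calc Q = mulU Q idU := (mulU_idU hQ).symm
  _ = mulU Q (mulU P Q') := by rw [h2]
  _ = mulU (mulU Q P) Q' := (mulU_assoc hP Q Q').symm
  _ = mulU idU Q' := by rw [h1]
  _ = Q' := idU_mulU hQ'

lemma GFm_inj {P Q : ℕ → ℕ → ℂ} (hP : ∀ i k, k < i → P i k = 0)
    (hQ : ∀ i k, k < i → Q i k = 0) (h : GFm P = GFm Q) : P = Q := by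
  funext i k
  rcases le_or_gt i k with hik | hik
  · have := congrArg (fun s => (PowerSeries.coeff (R := Polynomial ℂ) k s).coeff i) h
    simp only [GFm_coeff_coeff, if_pos hik] at this
    exact mul_left_cancel₀ (inv_ne_zero (fact_ne k)) this
  · rw [hP i k hik, hQ i k hik]

lemma MM_X_one : MM 1 X = idU := by
  funext i k
  rw [MM, idU, one_mul, coeff_X_pow]
  rcases eq_or_ne i k with rfl | hne
  · simp [mul_inv_cancel₀ (fact_ne i)]
  · rw [if_neg (fun hh => hne hh.symm), if_neg hne, mul_zero]

lemma MM_inj {A B A' B' : PowerSeries ℂ}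
    (h : MM A B = MM A' B') : A = A' ∧ A * B = A' * B' := by
  have ext_row : ∀ i, A * B ^ i = A' * B' ^ i := by
    intro i
    ext k
    have := congrFun (congrFun h i) k
    rw [MM, MM] at this
    have hne : (Nat.factorial k : ℂ) * ((Nat.factorial i : ℂ))⁻¹ ≠ 0 :=
      mul_ne_zero (fact_ne k) (inv_ne_zero (fact_ne i))
    exact mul_left_cancel₀ hne this
  constructor
  · have := ext_row 0
    simpa using this
  · have := ext_row 1
    simpa using this

lemma exists_pcomp_inv {B : PowerSeries ℂ} (hB : F1 B) :
    ∃ C, F1 C ∧ pcomp B C = X ∧ pcomp C B = X := by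
  obtain ⟨C, hC, h1⟩ := exists_pcomp_right_inv hB
  obtain ⟨D, hD, h2⟩ := exists_pcomp_right_inv hC
  have hBD : B = D := by
    calc B = pcomp B X := (pcomp_X_right B).symm
    _ = pcomp B (pcomp C D) := by rw [h2]
    _ = pcomp (pcomp B C) D := (pcomp_assoc hC.1 hD.1).symm
    _ = pcomp X D := by rw [h1]
    _ = D := pcomp_X_left hD.1
  exact ⟨C, hC, h1, by rw [hBD]; exact h2⟩

lemma F1_X : F1 (X : PowerSeries ℂ) := ⟨constantCoeff_X, coeff_one_X⟩

lemma F0_one : F0 (1 : PowerSeries ℂ) := map_one _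

lemma sheffer_iff (P : ℕ → ℕ → ℂ) :
    IsSheffer P ↔ ∃ A B, F0 A ∧ F1 B ∧ P = MM A B := by
  constructor
  · rintro ⟨hU, A, B, hA, hB, hGF⟩
    refine ⟨A, B, hA, hB, ?_⟩
    apply GFm_inj hU.2 (MM_unitri hA hB.1 hB.2).2
    rw [hGF, GFm_MM hB.1]
  · rintro ⟨A, B, hA, hB, rfl⟩
    exact ⟨MM_unitri hA hB.1 hB.2, A, B, hA, hB, GFm_MM hB.1⟩

lemma appell_iff (P : ℕ → ℕ → ℂ) :
    IsAppell P ↔ ∃ A, F0 A ∧ P = MM A X := by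
  constructor
  · rintro ⟨hU, A, hA, hGF⟩
    refine ⟨A, hA, ?_⟩
    apply GFm_inj hU.2 (MM_unitri hA F1_X.1 F1_X.2).2
    rw [hGF, GFm_MM F1_X.1]
  · rintro ⟨A, hA, rfl⟩
    exact ⟨MM_unitri hA F1_X.1 F1_X.2, A, hA, GFm_MM F1_X.1⟩

lemma umbral_iff (P : ℕ → ℕ → ℂ) :
    IsUmbral P ↔ ∃ B, F1 B ∧ P = MM 1 B := by
  constructor
  · rintro ⟨hU, B, hB, hGF⟩
    refine ⟨B, hB, ?_⟩
    apply GFm_inj hU.2 (MM_unitri F0_one hB.1 hB.2).2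
    rw [hGF, GFm_MM hB.1]
  · rintro ⟨B, hB, rfl⟩
    exact ⟨MM_unitri F0_one hB.1 hB.2, B, hB, GFm_MM hB.1⟩

lemma F0_ne_zero {A : PowerSeries ℂ} (hA : F0 A) : A ≠ 0 := fun h => by
  have := hA
  rw [F0, h, map_zero] at this
  exact zero_ne_one this


/-- `𝔸(ℂ)` is an abelian normal subgroup of `𝕊(ℂ)`, `𝔹(ℂ)` is a subgroup,
and every Sheffer operator factors uniquely as an Appell operator times an umbral one. -/
theorem stmt14 :
    -- 𝔸(ℂ) is closed under products and abelian
    (∀ P Q, IsAppell P → IsAppell Q → IsAppell (mulU P Q) ∧ mulU P Q = mulU Q P) ∧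
    -- 𝔸(ℂ) is closed under inverses
    (∀ P Q, IsAppell P → UnitriM Q → mulU P Q = idU → mulU Q P = idU → IsAppell Q) ∧
    -- 𝔸(ℂ) is normal in 𝕊(ℂ)
    (∀ S S' P, IsSheffer S → UnitriM S' → mulU S S' = idU → mulU S' S = idU →
      IsAppell P → IsAppell (mulU (mulU S P) S')) ∧
    -- 𝔹(ℂ) is a subgroup
    (∀ P Q, IsUmbral P → IsUmbral Q → IsUmbral (mulU P Q)) ∧
    (∀ P Q, IsUmbral P → UnitriM Q → mulU P Q = idU → mulU Q P = idU → IsUmbral Q) ∧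
    -- unique factorization 𝕊(ℂ) = 𝔸(ℂ) ⋊ 𝔹(ℂ)
    (∀ P, IsSheffer P → ∃! pq : (ℕ → ℕ → ℂ) × (ℕ → ℕ → ℂ),
      IsAppell pq.1 ∧ IsUmbral pq.2 ∧ P = mulU pq.1 pq.2) := by

  have hX0 : constantCoeff (R := ℂ) (X : PowerSeries ℂ) = 0 := constantCoeff_X
  refine ⟨?_, ?_, ?_, ?_, ?_, ?_⟩
  · -- Appell closed + abelian
    rintro P Q hP hQ
    obtain ⟨A, hA, rfl⟩ := (appell_iff P).1 hP
    obtain ⟨A', hA', rfl⟩ := (appell_iff Q).1 hQ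
    have e1 : mulU (MM A X) (MM A' X) = MM (A' * A) X := by
      rw [mulU_MM hX0 hX0, pcomp_X_right, pcomp_X_right]
    have e2 : mulU (MM A' X) (MM A X) = MM (A * A') X := by
      rw [mulU_MM hX0 hX0, pcomp_X_right, pcomp_X_right]
    constructor
    · rw [e1]
      exact (appell_iff _).2 ⟨A' * A,
        show constantCoeff (R := ℂ) (A' * A) = 1 by rw [map_mul, hA, hA', one_mul], rfl⟩
    · rw [e1, e2, mul_comm A A']
  · -- Appell inverses
    rintro P Q hP hQU h1 h2
    obtain ⟨A, hA, rfl⟩ := (appell_iff P).1 hP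
    have hAinv : F0 A⁻¹ := by
      rw [F0, PowerSeries.constantCoeff_inv, hA, inv_one]
    have hiA : A⁻¹ * A = 1 := by
      rw [mul_comm]
      exact PowerSeries.mul_inv_cancel A (by rw [hA]; exact one_ne_zero)
    have e : mulU (MM A X) (MM A⁻¹ X) = idU := by
      rw [mulU_MM hX0 hX0, pcomp_X_right, pcomp_X_right, hiA, MM_X_one]
    have hQ' : Q = MM A⁻¹ X :=
      mulU_inv_unique (MM_unitri hA F1_X.1 F1_X.2).2 hQU.2
        (MM_unitri hAinv F1_X.1 F1_X.2).2 h2 e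
    rw [hQ']
    exact (appell_iff _).2 ⟨A⁻¹, hAinv, rfl⟩
  · -- normality
    rintro S S' P hS hS'U hSS' hS'S hP
    obtain ⟨A, B, hA, hB, rfl⟩ := (sheffer_iff S).1 hS
    obtain ⟨A₀, hA0, rfl⟩ := (appell_iff P).1 hP
    obtain ⟨B', hB', hBB', hB'B⟩ := exists_pcomp_inv hB
    have hV0 : constantCoeff (R := ℂ) (pcomp A B') = 1 := by
      rw [constantCoeff_pcomp _ hB'.1, hA]
    have hA2 : F0 (pcomp A B')⁻¹ := by
      rw [F0, PowerSeries.constantCoeff_inv, hV0, inv_one]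
    have hinvV : (pcomp A B')⁻¹ * pcomp A B' = 1 := by
      rw [mul_comm]
      exact PowerSeries.mul_inv_cancel _ (by rw [hV0]; exact one_ne_zero)
    have hVA : pcomp (pcomp A B') B = A := by
      rw [pcomp_assoc hB'.1 hB.1, hB'B, pcomp_X_right]
    have eST : mulU (MM A B) (MM (pcomp A B')⁻¹ B') = idU := by
      rw [mulU_MM hB.1 hB'.1, hBB', hinvV, MM_X_one]
    have eTS : mulU (MM (pcomp A B')⁻¹ B') (MM A B) = idU := by
      rw [mulU_MM hB'.1 hB.1, hB'B]
      have hkey : A * pcomp (pcomp A B')⁻¹ B = 1 := by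
        have h1 : pcomp (pcomp A B')⁻¹ B * pcomp (pcomp A B') B = 1 := by
          rw [← pcomp_mul _ _ hB.1, hinvV, pcomp_one]
        rw [hVA] at h1
        rw [mul_comm]
        exact h1
      rw [hkey, MM_X_one]
    have hS'T : S' = MM (pcomp A B')⁻¹ B' :=
      mulU_inv_unique (MM_unitri hA hB.1 hB.2).2 hS'U.2
        (MM_unitri hA2 hB'.1 hB'.2).2 hS'S eST
    rw [hS'T]
    have eSP : mulU (MM A B) (MM A₀ X) = MM (A₀ * A) B := by
      rw [mulU_MM hB.1 hX0, pcomp_X_right, pcomp_X_right]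
    rw [eSP, mulU_MM hB.1 hB'.1, hBB']
    have hfin : (pcomp A B')⁻¹ * pcomp (A₀ * A) B' = pcomp A₀ B' := by
      rw [pcomp_mul _ _ hB'.1,
        show (pcomp A B')⁻¹ * (pcomp A₀ B' * pcomp A B')
          = ((pcomp A B')⁻¹ * pcomp A B') * pcomp A₀ B' by ring,
        hinvV, one_mul]
    rw [hfin]
    exact (appell_iff _).2 ⟨pcomp A₀ B',
      show constantCoeff (R := ℂ) (pcomp A₀ B') = 1 by rw [constantCoeff_pcomp _ hB'.1, hA0], rfl⟩
  · -- umbral closure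
    rintro P Q hP hQ
    obtain ⟨B, hB, rfl⟩ := (umbral_iff P).1 hP
    obtain ⟨B', hB', rfl⟩ := (umbral_iff Q).1 hQ
    rw [mulU_MM hB.1 hB'.1, pcomp_one, one_mul]
    refine (umbral_iff _).2 ⟨pcomp B B', ⟨?_, ?_⟩, rfl⟩
    · rw [constantCoeff_pcomp _ hB'.1, hB.1]
    · rw [coeff_one_pcomp hB'.1, hB.2, hB'.2, one_mul]
  · -- umbral inverse
    rintro P Q hP hQU h1 h2
    obtain ⟨B, hB, rfl⟩ := (umbral_iff P).1 hP
    obtain ⟨B', hB', hBB', hB'B⟩ := exists_pcomp_inv hB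
    have e : mulU (MM 1 B) (MM 1 B') = idU := by
      rw [mulU_MM hB.1 hB'.1, pcomp_one, one_mul, hBB', MM_X_one]
    have hQ' : Q = MM 1 B' :=
      mulU_inv_unique (MM_unitri F0_one hB.1 hB.2).2 hQU.2
        (MM_unitri F0_one hB'.1 hB'.2).2 h2 e
    rw [hQ']
    exact (umbral_iff _).2 ⟨B', hB', rfl⟩
  · -- factorization
    rintro P hP
    obtain ⟨A, B, hA, hB, rfl⟩ := (sheffer_iff P).1 hP
    obtain ⟨B', hB', hBB', hB'B⟩ := exists_pcomp_inv hB
    have hA1 : F0 (pcomp A B') := by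
      rw [F0, constantCoeff_pcomp _ hB'.1, hA]
    refine ⟨(MM (pcomp A B') X, MM 1 B), ⟨?_, ?_, ?_⟩, ?_⟩
    · exact (appell_iff _).2 ⟨_, hA1, rfl⟩
    · exact (umbral_iff _).2 ⟨B, hB, rfl⟩
    · rw [mulU_MM hX0 hB.1, pcomp_X_left hB.1, one_mul,
        pcomp_assoc hB'.1 hB.1, hB'B, pcomp_X_right]
    · rintro ⟨Q₁, Q₂⟩ ⟨hQ1, hQ2, hprod⟩
      obtain ⟨A₁, hA1', hQ1eq⟩ := (appell_iff Q₁).1 hQ1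
      obtain ⟨B₂, hB2, hQ2eq⟩ := (umbral_iff Q₂).1 hQ2
      rw [hQ1eq, hQ2eq, mulU_MM hX0 hB2.1, pcomp_X_left hB2.1, one_mul] at hprod
      obtain ⟨hAeq, hABeq⟩ := MM_inj hprod
      have hBeq : B = B₂ := by
        apply mul_left_cancel₀ (F0_ne_zero hA)
        rw [hABeq, hAeq]
      have hA1eq : A₁ = pcomp A B' := by
        rw [hAeq, ← hBeq, pcomp_assoc hB.1 hB'.1, hBB', pcomp_X_right]
      have : Q₁ = MM (pcomp A B') X := by rw [hQ1eq, hA1eq]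
      have h2' : Q₂ = MM 1 B := by rw [hQ2eq, hBeq]
      exact Prod.ext this h2'
end Aux
end

section
/- The set of operators on ℂ[z] of the form Q = Σ_{k≥1} α_k D^k + z Σ_{k≥2} β_k D^k (α_k, β_k ∈ ℂ) is closed under the commutator bracket: if Q⁽ᵐ⁾ corresponds to data (α⁽ᵐ⁾(ξ), β⁽ᵐ⁾(ξ)) for m = 1,2, with α⁽ᵐ⁾(ξ) = Σ_{k≥1} α⁽ᵐ⁾_k ξ^k and β⁽ᵐ⁾(ξ) = Σ_{k≥2} β⁽ᵐ⁾_k ξ^k, then [Q⁽¹⁾, Q⁽²⁾] has data α = β⁽²⁾·(α⁽¹⁾)' - β⁽¹⁾·(α⁽²⁾)' and β = β⁽²⁾·(β⁽¹⁾)' - β⁽¹⁾·(β⁽²⁾)', where ' denotes the formal derivative with respect to ξ. -/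
/-- The differentiation operator `D` on `ℂ[z]`. -/
noncomputable def Dop : Module.End ℂ (Polynomial ℂ) := Polynomial.derivative

/-- The formal derivative of a power series with respect to `ξ`. -/
noncomputable def pderiv (f : PowerSeries ℂ) : PowerSeries ℂ :=
  PowerSeries.mk fun n => ((n : ℂ) + 1) * PowerSeries.coeff (n + 1) f

noncomputable def Mop : Module.End ℂ (Polynomial ℂ) := LinearMap.mulLeft ℂ Polynomial.X

open Polynomial PowerSeries

lemma Mop_apply (p : Polynomial ℂ) : Mop p = Polynomial.X * p := rfl

lemma DM : Dop * Mop = Mop * Dop + 1 := by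
  apply LinearMap.ext; intro p
  rw [Module.End.mul_apply, LinearMap.add_apply, Module.End.mul_apply, Module.End.one_apply,
    Mop_apply, Mop_apply]
  unfold Dop
  rw [Polynomial.derivative_mul, Polynomial.derivative_X, one_mul, add_comm]

lemma aeval_comm (f : Polynomial ℂ) :
    Polynomial.aeval Dop f * Mop = Mop * Polynomial.aeval Dop f + Polynomial.aeval Dop (derivative f) := by
  induction f using Polynomial.induction_on with
  | C a => simp [Algebra.commutes a Mop]
  | add f g hf hg =>
      simp only [map_add, add_mul, hf, hg, mul_add]; abel
  | monomial n a ih =>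
      have h1 : (Polynomial.C a : Polynomial ℂ) * Polynomial.X ^ (n + 1)
          = (Polynomial.C a * Polynomial.X ^ n) * Polynomial.X := by ring
      have h2 : derivative (Polynomial.C a * Polynomial.X ^ n * Polynomial.X)
          = derivative (Polynomial.C a * Polynomial.X ^ n) * Polynomial.X
            + Polynomial.C a * Polynomial.X ^ n := by
        rw [Polynomial.derivative_mul, Polynomial.derivative_X, mul_one]
      have hX : ∀ g : Polynomial ℂ,
          Polynomial.aeval Dop (g * Polynomial.X) = Polynomial.aeval Dop g * Dop := by
        intro g; rw [map_mul, Polynomial.aeval_X]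
      rw [h1, h2, map_add, hX, hX, mul_assoc, DM, mul_add, mul_one, ← mul_assoc, ih, add_mul]
      noncomm_ring

lemma bridge (α : PowerSeries ℂ) (hα : PowerSeries.constantCoeff α = 0) {N : ℕ}
    (p : Polynomial ℂ) (hp : p.natDegree ≤ N) :
    Polynomial.aeval Dop (PowerSeries.trunc (N + 1) α) p
      = ∑ k ∈ Finset.Icc 1 p.natDegree, PowerSeries.coeff k α • (Dop ^ k) p := by
  rw [Polynomial.aeval_eq_sum_range' (PowerSeries.natDegree_trunc_lt α N)]
  rw [LinearMap.sum_apply]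
  have hcong : ∑ d ∈ Finset.range (N + 1), ((trunc (N + 1) α).coeff d • Dop ^ d) p
      = ∑ d ∈ Finset.range (N + 1), PowerSeries.coeff d α • (Dop ^ d) p := by
    apply Finset.sum_congr rfl
    intro d hd
    simp only [Finset.mem_range] at hd
    rw [LinearMap.smul_apply, PowerSeries.coeff_trunc, if_pos hd]
  rw [hcong]
  symm
  apply Finset.sum_subset
  · intro k hk
    simp only [Finset.mem_Icc] at hk
    simp only [Finset.mem_range]
    omega
  · intro k hk hk'
    simp only [Finset.mem_range] at hk
    simp only [Finset.mem_Icc] at hk'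
    rcases Nat.eq_zero_or_pos k with rfl | hk0
    · simp [hα]
    · have hlt : p.natDegree < k := by omega
      have : (Dop ^ k) p = 0 := by
        simp only [Module.End.pow_apply, Dop]
        exact Polynomial.iterate_derivative_eq_zero hlt
      rw [this, smul_zero]

lemma eval_congr (t₁ t₂ : Polynomial ℂ) (p : Polynomial ℂ)
    (h : ∀ m, m ≤ p.natDegree → t₁.coeff m = t₂.coeff m) :
    Polynomial.aeval Dop t₁ p = Polynomial.aeval Dop t₂ p := by
  set K := max t₁.natDegree t₂.natDegree with hK
  rw [Polynomial.aeval_eq_sum_range' (n := K + 1) (by omega : t₁.natDegree < K + 1),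
    Polynomial.aeval_eq_sum_range' (n := K + 1) (by omega : t₂.natDegree < K + 1),
    LinearMap.sum_apply, LinearMap.sum_apply]
  apply Finset.sum_congr rfl
  intro m _
  rw [LinearMap.smul_apply, LinearMap.smul_apply]
  by_cases hm : m ≤ p.natDegree
  · rw [h m hm]
  · have : (Dop ^ m) p = 0 := by
      simp only [Module.End.pow_apply, Dop]
      exact Polynomial.iterate_derivative_eq_zero (by omega)
    rw [this, smul_zero, smul_zero]

lemma coeff_prod (β α : PowerSeries ℂ) (hb : PowerSeries.constantCoeff β = 0) (N m : ℕ)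
    (hm : m ≤ N) :
    (PowerSeries.trunc (N + 1) β * Polynomial.derivative (PowerSeries.trunc (N + 1) α)).coeff m
      = PowerSeries.coeff m (β * _root_.pderiv α) := by
  rw [Polynomial.coeff_mul, PowerSeries.coeff_mul]
  apply Finset.sum_congr rfl
  intro x hx
  rw [Finset.HasAntidiagonal.mem_antidiagonal] at hx
  rw [Polynomial.coeff_derivative, PowerSeries.coeff_trunc]
  by_cases h2 : x.2 + 1 < N + 1
  · rw [PowerSeries.coeff_trunc, if_pos (by omega), if_pos h2]
    simp only [_root_.pderiv, PowerSeries.coeff_mk]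
    ring
  · have hx1 : x.1 = 0 := by omega
    have hx2 : (PowerSeries.coeff x.1) β = 0 := by rw [hx1, PowerSeries.coeff_zero_eq_constantCoeff]; exact hb
    rw [PowerSeries.coeff_trunc, if_pos (by omega : x.1 < N + 1), hx2]
    ring

/-- `Q` is the operator `α(D) + M(β(D)) = Σ_{k≥1} α_k D^k + z Σ_{k≥2} β_k D^k` on `ℂ[z]`
with data `(α(ξ), β(ξ))`. -/
def OpData (α β : PowerSeries ℂ) (Q : Module.End ℂ (Polynomial ℂ)) : Prop :=
  ∀ p : Polynomial ℂ,
    Q p = ∑ k ∈ Finset.Icc 1 p.natDegree, PowerSeries.coeff k α • (Dop ^ k) p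
      + Polynomial.X * ∑ k ∈ Finset.Icc 2 p.natDegree, PowerSeries.coeff k β • (Dop ^ k) p

lemma pow_deg (p : Polynomial ℂ) (k : ℕ) : ((Dop ^ k) p).natDegree ≤ p.natDegree - k := by
  simp only [Module.End.pow_apply, Dop]
  exact Polynomial.natDegree_iterate_derivative p k

lemma deg_le {α β : PowerSeries ℂ} {Q : Module.End ℂ (Polynomial ℂ)} (h : OpData α β Q)
    (p : Polynomial ℂ) : (Q p).natDegree ≤ p.natDegree := by
  rw [h p]
  apply (Polynomial.natDegree_add_le _ _).trans
  apply max_le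
  · apply (Polynomial.natDegree_sum_le_of_forall_le _ _ (fun k hk => ?_))
    exact (Polynomial.natDegree_smul_le _ _).trans ((pow_deg p k).trans (Nat.sub_le _ _))
  · by_cases hn : 2 ≤ p.natDegree
    · apply (Polynomial.natDegree_mul_le).trans
      have : (∑ k ∈ Finset.Icc 2 p.natDegree,
          PowerSeries.coeff k β • (Dop ^ k) p).natDegree ≤ p.natDegree - 2 := by
        apply (Polynomial.natDegree_sum_le_of_forall_le _ _ (fun k hk => ?_))
        simp only [Finset.mem_Icc] at hk
        exact (Polynomial.natDegree_smul_le _ _).trans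
          ((pow_deg p k).trans (Nat.sub_le_sub_left hk.1 _))
      have hX : (Polynomial.X : Polynomial ℂ).natDegree ≤ 1 := Polynomial.natDegree_X_le
      omega
    · rw [Finset.Icc_eq_empty (by omega), Finset.sum_empty, mul_zero]
      simp

lemma key (f g f₂ g₂ : Polynomial ℂ) :
    (Polynomial.aeval Dop f + Mop * Polynomial.aeval Dop g)
        * (Polynomial.aeval Dop f₂ + Mop * Polynomial.aeval Dop g₂)
      = Polynomial.aeval Dop (f * f₂ + derivative f * g₂)
        + Mop * Polynomial.aeval Dop (f * g₂ + g * f₂ + derivative g * g₂)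
        + Mop * Mop * Polynomial.aeval Dop (g * g₂) := by
  have c : ∀ u v : Polynomial ℂ, Polynomial.aeval Dop u * (Mop * Polynomial.aeval Dop v)
      = Mop * (Polynomial.aeval Dop u * Polynomial.aeval Dop v)
        + Polynomial.aeval Dop (derivative u) * Polynomial.aeval Dop v := by
    intro u v
    rw [← mul_assoc, aeval_comm, add_mul, mul_assoc]
  rw [add_mul, mul_add, mul_add, c f g₂,
    mul_assoc Mop (Polynomial.aeval Dop g) (Mop * Polynomial.aeval Dop g₂), c g g₂]
  simp only [← map_mul, map_add, mul_add, add_mul, mul_assoc]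
  abel

lemma sum_Icc_two (β : PowerSeries ℂ) (hb : PowerSeries.coeff 1 β = 0) (q : Polynomial ℂ) :
    ∑ k ∈ Finset.Icc 2 q.natDegree, PowerSeries.coeff k β • (Dop ^ k) q
      = ∑ k ∈ Finset.Icc 1 q.natDegree, PowerSeries.coeff k β • (Dop ^ k) q := by
  apply Finset.sum_subset (Finset.Icc_subset_Icc (by omega) le_rfl)
  intro k hk hk'
  simp only [Finset.mem_Icc] at hk hk'
  have : k = 1 := by omega
  rw [this, hb, zero_smul]

/-- the operators `α(D) + M(β(D))` are closed under the commutator, and the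
commutator has data `(β²·(α¹)' - β¹·(α²)', β²·(β¹)' - β¹·(β²)')`. -/
theorem stmt17 (α₁ β₁ α₂ β₂ : PowerSeries ℂ) (Q₁ Q₂ : Module.End ℂ (Polynomial ℂ))
    (hα₁ : PowerSeries.constantCoeff α₁ = 0)
    (hα₂ : PowerSeries.constantCoeff α₂ = 0)
    (hβ₁ : PowerSeries.constantCoeff β₁ = 0 ∧ PowerSeries.coeff 1 β₁ = 0)
    (hβ₂ : PowerSeries.constantCoeff β₂ = 0 ∧ PowerSeries.coeff 1 β₂ = 0)
    (h₁ : OpData α₁ β₁ Q₁) (h₂ : OpData α₂ β₂ Q₂) :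
    OpData (β₂ * pderiv α₁ - β₁ * pderiv α₂) (β₂ * pderiv β₁ - β₁ * pderiv β₂)
      (Q₁ * Q₂ - Q₂ * Q₁) := by
  intro p
  set n := p.natDegree with hn
  set γ := β₂ * pderiv α₁ - β₁ * pderiv α₂ with hγdef
  set δ := β₂ * pderiv β₁ - β₁ * pderiv β₂ with hδdef
  set a1 := PowerSeries.trunc (n + 1) α₁ with ha1
  set b1 := PowerSeries.trunc (n + 1) β₁ with hb1
  set a2 := PowerSeries.trunc (n + 1) α₂ with ha2
  set b2 := PowerSeries.trunc (n + 1) β₂ with hb2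
  set F₁ : Module.End ℂ (Polynomial ℂ) := Polynomial.aeval Dop a1 + Mop * Polynomial.aeval Dop b1
    with hF₁
  set F₂ : Module.End ℂ (Polynomial ℂ) := Polynomial.aeval Dop a2 + Mop * Polynomial.aeval Dop b2
    with hF₂
  -- replace Q by F on low-degree polynomials
  have hQ1 : ∀ q : Polynomial ℂ, q.natDegree ≤ n → Q₁ q = F₁ q := by
    intro q hq
    rw [h₁ q, hF₁, sum_Icc_two β₁ hβ₁.2 q, LinearMap.add_apply, Module.End.mul_apply,
      Mop_apply, bridge α₁ hα₁ q hq, bridge β₁ hβ₁.1 q hq]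
  have hQ2 : ∀ q : Polynomial ℂ, q.natDegree ≤ n → Q₂ q = F₂ q := by
    intro q hq
    rw [h₂ q, hF₂, sum_Icc_two β₂ hβ₂.2 q, LinearMap.add_apply, Module.End.mul_apply,
      Mop_apply, bridge α₂ hα₂ q hq, bridge β₂ hβ₂.1 q hq]
  have e1 : (Q₁ * Q₂ - Q₂ * Q₁) p = (F₁ * F₂ - F₂ * F₁) p := by
    simp only [LinearMap.sub_apply, Module.End.mul_apply]
    rw [hQ1 (Q₂ p) (deg_le h₂ p), hQ2 (Q₁ p) (deg_le h₁ p), hQ2 p le_rfl, hQ1 p le_rfl]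
  set G : Polynomial ℂ := b2 * Polynomial.derivative a1 - b1 * Polynomial.derivative a2 with hG
  set Dl : Polynomial ℂ := b2 * Polynomial.derivative b1 - b1 * Polynomial.derivative b2 with hDl
  have e2 : F₁ * F₂ - F₂ * F₁
      = Polynomial.aeval Dop G + Mop * Polynomial.aeval Dop Dl := by
    rw [hF₁, hF₂, key a1 b1 a2 b2, key a2 b2 a1 b1,
      show (b2 * b1 : Polynomial ℂ) = b1 * b2 from mul_comm _ _]
    have habel : ∀ X1 Y1 X2 Y2 Z : Module.End ℂ (Polynomial ℂ),
        X1 + Y1 + Z - (X2 + Y2 + Z) = (X1 - X2) + (Y1 - Y2) := by intros; abel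
    rw [habel]
    congr 1
    · rw [← map_sub]; congr 1; rw [hG]; ring
    · rw [← mul_sub, ← map_sub]; refine congrArg (fun t => Mop * Polynomial.aeval Dop t) ?_; rw [hDl]; ring
  rw [e1, e2, LinearMap.add_apply, Module.End.mul_apply, Mop_apply]
  -- constant coefficient facts
  have hγ0 : PowerSeries.constantCoeff γ = 0 := by
    simp [hγdef, hβ₁.1, hβ₂.1]
  have hδ0 : PowerSeries.constantCoeff δ = 0 := by
    simp [hδdef, hβ₁.1, hβ₂.1]
  have hδ1 : PowerSeries.coeff 1 δ = 0 := by
    simp [hδdef, PowerSeries.coeff_mul, Finset.Nat.antidiagonal_succ, hβ₁, hβ₂,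
      PowerSeries.coeff_zero_eq_constantCoeff]
  -- identify the two summands
  have hGp : Polynomial.aeval Dop G p
      = ∑ k ∈ Finset.Icc 1 n, PowerSeries.coeff k γ • (Dop ^ k) p := by
    rw [eval_congr G (PowerSeries.trunc (n + 1) γ) p ?_, bridge γ hγ0 p le_rfl]
    intro m hm
    rw [hG, PowerSeries.coeff_trunc, if_pos (by omega : m < n + 1), Polynomial.coeff_sub,
      hγdef, map_sub, ha1, ha2, hb1, hb2,
      coeff_prod β₂ α₁ hβ₂.1 n m hm, coeff_prod β₁ α₂ hβ₁.1 n m hm]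
  have hDp : Polynomial.aeval Dop Dl p
      = ∑ k ∈ Finset.Icc 2 n, PowerSeries.coeff k δ • (Dop ^ k) p := by
    rw [eval_congr Dl (PowerSeries.trunc (n + 1) δ) p ?_, bridge δ hδ0 p le_rfl,
      ← sum_Icc_two δ hδ1 p]
    intro m hm
    rw [hDl, PowerSeries.coeff_trunc, if_pos (by omega : m < n + 1), Polynomial.coeff_sub,
      hδdef, map_sub, hb1, hb2,
      coeff_prod β₂ β₁ hβ₂.1 n m hm, coeff_prod β₁ β₂ hβ₁.1 n m hm]
  rw [hGp, hDp]
end
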